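/- arXiv:1806.04424 — 2 statements merged into one kernel-verified Lean document; each statement's English description precedes it below -/
import Mathlib

section
/- Let q, z, c be complex numbers with |q| < 1, |zq| < 1 and |c| ≤ 1. Then ∑_{n=1}^{∞} (−1)^{n−1} z^n q^{n(n+1)/2} / ((1 − c q^n) (zq;q)_n) = ∑_{n=1}^{∞} z q^n [∏_{k=1}^{n-1}(c − z q^k)] / (zq;q)_n. (For c ≠ 0 the right-hand side equals (z/c) ∑_{n=1}^{∞} (zq/c;q)_{n-1} (cq)^n / (zq;q)_n.) -/
open Finset

/-- The finite q-Pochhammer symbol `(a;q)_n = ∏_{k=0}^{n-1} (1 - a q^k)`. -/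
noncomputable def qPoch (a q : ℂ) (n : ℕ) : ℂ := ∏ k ∈ Finset.range n, (1 - a * q ^ k)

/-!
Write `S(w, d)` for either side with `z, c` replaced by `w, d`. Both sides satisfy the functional
equation `(1 - wq) S(w, d) + wq S(wq, dq) = wq / (1 - dq)`: for the left side termwise, after
splitting the first factor off `(wq;q)_{n+1}`; for the right side because the combination
telescopes. Hence the difference `D` satisfies `D(w, d) = -wq / (1 - wq) · D(wq, dq)`, and
`D(z, c) = ∏_{j<N} (-zq^{j+1} / (1 - zq^{j+1})) · D(zq^N, cq^N)`. Both series are bounded uniformly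
on the region `‖wq‖ ≤ ‖zq‖, ‖d‖ ≤ 1`, which the shift preserves, while the product tends to `0`.
-/

open Filter Topology Real

theorem tendsto_prod_range_zero {R : Type*} [NormedCommRing R] [CompleteSpace R] {a : ℕ → R}
    (ha : Tendsto a atTop (𝓝 0)) : Tendsto (fun N ↦ ∏ j ∈ range N, a j) atTop (𝓝 0) := by
  refine (summable_of_ratio_norm_eventually_le one_half_lt_one ?_).tendsto_atTop_zero
  filter_upwards [(tendsto_norm_zero.comp ha).eventually_lt_const one_half_pos] with N hN
  rw [prod_range_succ, mul_comm (1 / 2 : ℝ)]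
  exact (norm_mul_le _ _).trans (mul_le_mul_of_nonneg_left hN.le (norm_nonneg _))

section NormBounds

variable {𝕜 : Type*} [NormedDivisionRing 𝕜] {x : 𝕜} {r : ℝ}

theorem one_sub_ne_zero_of_norm_lt_one (hx : ‖x‖ < 1) : 1 - x ≠ 0 :=
  sub_ne_zero.2 fun h ↦ by simp [← h] at hx

theorem norm_inv_one_sub_le (hx : ‖x‖ ≤ r) (hr : r < 1) : ‖(1 - x)⁻¹‖ ≤ (1 - r)⁻¹ := by
  rw [norm_inv]
  exact inv_anti₀ (by linarith) (by linarith [norm_sub_norm_le (1 : 𝕜) x, norm_one (α := 𝕜)])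

theorem norm_inv_one_sub_le_exp (hx : ‖x‖ ≤ r) (hr : r < 1) :
    ‖(1 - x)⁻¹‖ ≤ exp (‖x‖ / (1 - r)) := by
  have hx1 : 0 < 1 - ‖x‖ := by linarith
  calc ‖(1 - x)⁻¹‖ ≤ (1 - ‖x‖)⁻¹ := norm_inv_one_sub_le le_rfl (by linarith)
    _ = ‖x‖ / (1 - ‖x‖) + 1 := by field_simp; ring
    _ ≤ exp (‖x‖ / (1 - ‖x‖)) := add_one_le_exp _
    _ ≤ exp (‖x‖ / (1 - r)) := by gcongr

theorem norm_sub_le_exp {d : 𝕜} (hd : ‖d‖ ≤ 1) : ‖d - x‖ ≤ exp ‖x‖ := by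
  linarith [norm_sub_le d x, add_one_le_exp ‖x‖]

end NormBounds

theorem qPoch_succ (a q : ℂ) (n : ℕ) : qPoch a q (n + 1) = qPoch a q n * (1 - a * q ^ n) :=
  prod_range_succ _ _

theorem qPoch_succ_eq_one_sub_mul (a q : ℂ) (n : ℕ) :
    qPoch a q (n + 1) = (1 - a) * qPoch (a * q) q n := by
  simp only [qPoch, prod_range_succ', pow_zero, mul_one, pow_succ', mul_assoc, mul_comm (1 - a)]

theorem qPoch_ne_zero {a q : ℂ} (ha : ‖a‖ < 1) (hq : ‖q‖ ≤ 1) (n : ℕ) : qPoch a q n ≠ 0 :=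
  prod_ne_zero_iff.2 fun k _ ↦ one_sub_ne_zero_of_norm_lt_one <| by
    rw [norm_mul, norm_pow]
    exact (mul_le_of_le_one_right (norm_nonneg a) (pow_le_one₀ (norm_nonneg q) hq)).trans_lt ha

theorem norm_inv_qPoch_le {a q : ℂ} {θ : ℝ} (ha : ‖a‖ ≤ θ) (hθ : θ < 1) (hq : ‖q‖ < 1)
    (n : ℕ) : ‖(qPoch a q n)⁻¹‖ ≤ exp (θ / (1 - ‖q‖) / (1 - θ)) := by
  have hfac (k : ℕ) : ‖a * q ^ k‖ ≤ θ * ‖q‖ ^ k := by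
    rw [norm_mul, norm_pow]; gcongr
  have hθ0 : 0 ≤ θ := (norm_nonneg a).trans ha
  rw [qPoch, ← prod_inv_distrib, norm_prod]
  calc ∏ k ∈ range n, ‖(1 - a * q ^ k)⁻¹‖ ≤ ∏ k ∈ range n, exp (θ * ‖q‖ ^ k / (1 - θ)) := by
        refine prod_le_prod (fun _ _ ↦ norm_nonneg _) fun k _ ↦ ?_
        have hk : θ * ‖q‖ ^ k ≤ θ :=
          mul_le_of_le_one_right hθ0 (pow_le_one₀ (norm_nonneg q) hq.le)
        refine (norm_inv_one_sub_le_exp ((hfac k).trans hk) hθ).trans ?_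
        gcongr
        exact hfac k
    _ = exp ((θ * ∑ k ∈ range n, ‖q‖ ^ k) / (1 - θ)) := by rw [← exp_sum, ← sum_div, mul_sum]
    _ ≤ exp (θ / (1 - ‖q‖) / (1 - θ)) := by
        have hsum := geom_sum_Ico_le_of_lt_one (m := 0) (n := n) (norm_nonneg q) hq
        rw [← range_eq_Ico, pow_zero] at hsum
        gcongr
        simpa [div_eq_mul_one_div θ] using mul_le_mul_of_nonneg_left hsum hθ0

theorem norm_prod_sub_le {q w d : ℂ} (hd : ‖d‖ ≤ 1) (hq : ‖q‖ < 1) (n : ℕ) :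
    ‖∏ k ∈ Icc 1 n, (d - w * q ^ k)‖ ≤ exp (‖w * q‖ / (1 - ‖q‖)) := by
  rw [norm_prod]
  calc ∏ k ∈ Icc 1 n, ‖d - w * q ^ k‖ ≤ ∏ k ∈ Icc 1 n, exp (‖w‖ * ‖q‖ ^ k) :=
        prod_le_prod (fun _ _ ↦ norm_nonneg _) fun k _ ↦ by
          simpa only [norm_mul, norm_pow] using norm_sub_le_exp (x := w * q ^ k) hd
    _ = exp (‖w‖ * ∑ k ∈ Ico 1 (n + 1), ‖q‖ ^ k) := by
        rw [← exp_sum, mul_sum, Ico_add_one_right_eq_Icc]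
    _ ≤ exp (‖w * q‖ / (1 - ‖q‖)) := by
        have hsum := geom_sum_Ico_le_of_lt_one (m := 1) (n := n + 1) (norm_nonneg q) hq
        rw [norm_mul, mul_div_assoc]
        gcongr
        simpa using hsum

noncomputable def lhsTerm (q w d : ℂ) (n : ℕ) : ℂ :=
  (-1) ^ n * w ^ (n + 1) * q ^ ((n + 1) * (n + 2) / 2) /
    ((1 - d * q ^ (n + 1)) * qPoch (w * q) q (n + 1))

noncomputable def rhsTerm (q w d : ℂ) (n : ℕ) : ℂ :=
  w * q ^ (n + 1) * (∏ k ∈ Icc 1 n, (d - w * q ^ k)) / qPoch (w * q) q (n + 1)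

section Estimates

variable {q w d : ℂ} {θ : ℝ} (hq : ‖q‖ < 1) (hθ : θ < 1) (hw : ‖w * q‖ ≤ θ) (hd : ‖d‖ ≤ 1)
include hq hθ hw hd

theorem norm_lhsTerm_le (n : ℕ) :
    ‖lhsTerm q w d n‖ ≤ θ ^ n * (θ * (1 - ‖q‖)⁻¹ * exp (θ / (1 - ‖q‖) / (1 - θ))) := by
  have hnum : ‖(-1) ^ n * w ^ (n + 1) * q ^ ((n + 1) * (n + 2) / 2)‖ ≤ θ ^ (n + 1) := by
    have htri : n + 1 ≤ (n + 1) * (n + 2) / 2 := by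
      rw [Nat.le_div_iff_mul_le two_pos]; nlinarith
    rw [norm_mul, norm_mul, norm_pow, norm_pow, norm_pow, norm_neg, norm_one, one_pow, one_mul]
    calc ‖w‖ ^ (n + 1) * ‖q‖ ^ ((n + 1) * (n + 2) / 2) ≤ ‖w‖ ^ (n + 1) * ‖q‖ ^ (n + 1) := by
          gcongr ‖w‖ ^ (n + 1) * ?_
          exact pow_le_pow_of_le_one (norm_nonneg q) hq.le htri
      _ = ‖w * q‖ ^ (n + 1) := by rw [norm_mul, mul_pow]
      _ ≤ θ ^ (n + 1) := by gcongr
  have hdq : ‖d * q ^ (n + 1)‖ ≤ ‖q‖ := by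
    rw [norm_mul, norm_pow]
    exact (mul_le_of_le_one_left (by positivity) hd).trans
      (pow_le_of_le_one (norm_nonneg q) hq.le n.succ_ne_zero)
  have hθ0 : 0 ≤ θ := (norm_nonneg _).trans hw
  rw [lhsTerm, div_eq_mul_inv, mul_inv, norm_mul, norm_mul (1 - d * q ^ (n + 1))⁻¹]
  calc _ ≤ θ ^ (n + 1) * ((1 - ‖q‖)⁻¹ * exp (θ / (1 - ‖q‖) / (1 - θ))) := by
        gcongr
        exacts [norm_inv_one_sub_le hdq hq, norm_inv_qPoch_le hw hθ hq _]
    _ = _ := by ring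

theorem norm_rhsTerm_le (n : ℕ) :
    ‖rhsTerm q w d n‖ ≤
      ‖q‖ ^ n * (θ * exp (θ / (1 - ‖q‖)) * exp (θ / (1 - ‖q‖) / (1 - θ))) := by
  rw [rhsTerm, div_eq_mul_inv, norm_mul, norm_mul, pow_succ', ← mul_assoc, norm_mul,
    norm_pow]
  have hθ0 : 0 ≤ θ := (norm_nonneg _).trans hw
  have hprod := norm_prod_sub_le (w := w) hd hq n
  calc ‖w * q‖ * ‖q‖ ^ n * ‖∏ k ∈ Icc 1 n, (d - w * q ^ k)‖ * ‖(qPoch (w * q) q (n + 1))⁻¹‖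
      ≤ θ * ‖q‖ ^ n * exp (θ / (1 - ‖q‖)) * exp (θ / (1 - ‖q‖) / (1 - θ)) := by
        gcongr
        · exact hprod.trans (by gcongr)
        · exact norm_inv_qPoch_le hw hθ hq _
    _ = _ := by ring

theorem norm_tsum_lhsTerm_le :
    ‖∑' n, lhsTerm q w d n‖ ≤ (1 - θ)⁻¹ * (θ * (1 - ‖q‖)⁻¹ * exp (θ / (1 - ‖q‖) / (1 - θ))) :=
  tsum_of_norm_bounded ((hasSum_geometric_of_lt_one ((norm_nonneg _).trans hw) hθ).mul_right _)
    (norm_lhsTerm_le hq hθ hw hd)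

theorem norm_tsum_rhsTerm_le :
    ‖∑' n, rhsTerm q w d n‖ ≤
      (1 - ‖q‖)⁻¹ * (θ * exp (θ / (1 - ‖q‖)) * exp (θ / (1 - ‖q‖) / (1 - θ))) :=
  tsum_of_norm_bounded ((hasSum_geometric_of_lt_one (norm_nonneg q) hq).mul_right _)
    (norm_rhsTerm_le hq hθ hw hd)

theorem summable_lhsTerm : Summable (lhsTerm q w d) :=
  .of_norm_bounded ((summable_geometric_of_lt_one ((norm_nonneg _).trans hw) hθ).mul_right _)
    (norm_lhsTerm_le hq hθ hw hd)

theorem summable_rhsTerm : Summable (rhsTerm q w d) :=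
  .of_norm_bounded ((summable_geometric_of_lt_one (norm_nonneg q) hq).mul_right _)
    (norm_rhsTerm_le hq hθ hw hd)

end Estimates

section TermIdentities

variable {q w d : ℂ}

theorem lhsTerm_zero : lhsTerm q w d 0 = w * q / ((1 - d * q) * (1 - w * q)) := by
  simp [lhsTerm, qPoch]

theorem rhsTerm_zero : rhsTerm q w d 0 = w * q / (1 - w * q) := by
  simp [rhsTerm, qPoch]

theorem one_sub_mul_lhsTerm_zero (hw : 1 - w * q ≠ 0) :
    (1 - w * q) * lhsTerm q w d 0 = w * q / (1 - d * q) := by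
  rw [lhsTerm_zero]
  field_simp

theorem one_sub_mul_lhsTerm_succ (hw : 1 - w * q ≠ 0) (n : ℕ) :
    (1 - w * q) * lhsTerm q w d (n + 1) = -(w * q) * lhsTerm q (w * q) (d * q) n := by
  have htri : (n + 2) * (n + 3) / 2 = (n + 1) * (n + 2) / 2 + (n + 2) := by
    rw [show (n + 2) * (n + 3) = (n + 1) * (n + 2) + (n + 2) * 2 by ring,
      Nat.add_mul_div_right _ _ two_pos]
  simp only [lhsTerm, qPoch_succ_eq_one_sub_mul (w * q) q (n + 1), htri, pow_add]
  field_simp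
  ring

theorem rhsTerm_combination_telescopes (hw : ∀ m, qPoch (w * q) q m ≠ 0) (hd : 1 - d * q ≠ 0)
    (n : ℕ) :
    (1 - w * q) * rhsTerm q w d n + w * q * rhsTerm q (w * q) (d * q) n =
      (1 - w * q) / (1 - d * q) * (rhsTerm q w d n - rhsTerm q w d (n + 1)) := by
  have hprod : ∏ k ∈ Icc 1 n, (d * q - w * q * q ^ k) = q ^ n * ∏ k ∈ Icc 1 n, (d - w * q ^ k) := by
    rw [prod_congr rfl fun k _ ↦ show d * q - w * q * q ^ k = q * (d - w * q ^ k) by ring,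
      prod_mul_distrib, prod_const, Nat.card_Icc, Nat.add_sub_cancel]
  have hne := hw (n + 2)
  rw [qPoch_succ_eq_one_sub_mul, qPoch_succ] at hne
  obtain ⟨h1, hQ, hlast⟩ : 1 - w * q ≠ 0 ∧ qPoch (w * q * q) q n ≠ 0 ∧
      1 - w * q * q * q ^ n ≠ 0 := by simpa [not_or] using hne
  simp only [rhsTerm, hprod, qPoch_succ_eq_one_sub_mul (w * q) q,
    prod_Icc_succ_top (Nat.le_add_left 1 n)]
  rw [qPoch_succ]
  -- `field_simp` needs the side conditions in its own normal form
  have hd' : 1 - q * d ≠ 0 := by rwa [mul_comm]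
  have hlast' : 1 - w * q ^ 2 * q ^ n ≠ 0 := by rwa [sq, ← mul_assoc]
  field_simp
  ring

end TermIdentities

section FunctionalEquations

variable {q w d : ℂ} {θ : ℝ} (hq : ‖q‖ < 1) (hθ : θ < 1) (hw : ‖w * q‖ ≤ θ) (hd : ‖d‖ ≤ 1)
include hq hθ hw hd

theorem lhs_functional_equation :
    (1 - w * q) * ∑' n, lhsTerm q w d n + w * q * ∑' n, lhsTerm q (w * q) (d * q) n =
      w * q / (1 - d * q) := by
  have hwq := one_sub_ne_zero_of_norm_lt_one (hw.trans_lt hθ)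
  rw [(summable_lhsTerm hq hθ hw hd).tsum_eq_zero_add, mul_add, one_sub_mul_lhsTerm_zero hwq,
    ← tsum_mul_left, tsum_congr (one_sub_mul_lhsTerm_succ hwq), tsum_mul_left]
  ring

theorem rhs_functional_equation :
    (1 - w * q) * ∑' n, rhsTerm q w d n + w * q * ∑' n, rhsTerm q (w * q) (d * q) n =
      w * q / (1 - d * q) := by
  have hwq := one_sub_ne_zero_of_norm_lt_one (hw.trans_lt hθ)
  have hdq : 1 - d * q ≠ 0 := one_sub_ne_zero_of_norm_lt_one <| by
    rw [norm_mul]; exact (mul_le_of_le_one_left (norm_nonneg q) hd).trans_lt hq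
  have hs := summable_rhsTerm hq hθ hw hd
  have hs' : Summable (rhsTerm q (w * q) (d * q)) := summable_rhsTerm hq hθ
    (by rw [norm_mul]; exact (mul_le_of_le_one_right (norm_nonneg _) hq.le).trans hw)
    (by rw [norm_mul]; exact mul_le_one₀ hd (norm_nonneg q) hq.le)
  rw [← tsum_mul_left, ← tsum_mul_left, ← (hs.mul_left _).tsum_add (hs'.mul_left _),
    tsum_congr (rhsTerm_combination_telescopes (qPoch_ne_zero (hw.trans_lt hθ) hq.le) hdq),
    tsum_mul_left, hs.tsum_sub ((summable_nat_add_iff 1).2 hs), hs.tsum_eq_zero_add, add_sub_cancel_right]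
  rw [rhsTerm_zero]
  field_simp

end FunctionalEquations

theorem eq_of_functional_equation {q : ℂ} {θ M₁ M₂ : ℝ} (hq : ‖q‖ < 1) (hθ : θ < 1)
    {S T g : ℂ → ℂ → ℂ}
    (hS : ∀ w d, ‖w * q‖ ≤ θ → ‖d‖ ≤ 1 → (1 - w * q) * S w d + w * q * S (w * q) (d * q) = g w d)
    (hT : ∀ w d, ‖w * q‖ ≤ θ → ‖d‖ ≤ 1 → (1 - w * q) * T w d + w * q * T (w * q) (d * q) = g w d)
    (hSM : ∀ w d, ‖w * q‖ ≤ θ → ‖d‖ ≤ 1 → ‖S w d‖ ≤ M₁)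
    (hTM : ∀ w d, ‖w * q‖ ≤ θ → ‖d‖ ≤ 1 → ‖T w d‖ ≤ M₂)
    {z c : ℂ} (hz : ‖z * q‖ ≤ θ) (hc : ‖c‖ ≤ 1) : S z c = T z c := by
  have hstep (w d : ℂ) (hw : ‖w * q‖ ≤ θ) (hd : ‖d‖ ≤ 1) :
      S w d - T w d = -(w * q) / (1 - w * q) * (S (w * q) (d * q) - T (w * q) (d * q)) := by
    have := one_sub_ne_zero_of_norm_lt_one (hw.trans_lt hθ)
    rw [div_mul_eq_mul_div, eq_div_iff this]
    linear_combination hS w d hw hd - hT w d hw hd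
  have hzN (n : ℕ) : ‖z * q ^ n * q‖ ≤ θ := by
    rw [mul_right_comm, norm_mul, norm_pow]
    exact (mul_le_of_le_one_right (norm_nonneg _) (pow_le_one₀ (norm_nonneg q) hq.le)).trans hz
  have hcN (n : ℕ) : ‖c * q ^ n‖ ≤ 1 := by
    rw [norm_mul, norm_pow]
    exact mul_le_one₀ hc (by positivity) (pow_le_one₀ (norm_nonneg q) hq.le)
  set a : ℕ → ℂ := fun j ↦ -(z * q ^ (j + 1)) / (1 - z * q ^ (j + 1))
  have hiter (N : ℕ) : S z c - T z c =
      (∏ j ∈ range N, a j) * (S (z * q ^ N) (c * q ^ N) - T (z * q ^ N) (c * q ^ N)) := by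
    induction N with
    | zero => simp
    | succ N ih =>
      rw [ih, hstep _ _ (hzN N) (hcN N), prod_range_succ, mul_assoc z, mul_assoc c, ← pow_succ]
      ring
  have ha : Tendsto a atTop (𝓝 0) := by
    have h : Tendsto (fun j : ℕ ↦ z * q ^ (j + 1)) atTop (𝓝 0) := by
      simpa using ((tendsto_pow_atTop_nhds_zero_of_norm_lt_one hq).comp
        (tendsto_add_atTop_nat 1)).const_mul z
    have := h.neg.div (tendsto_const_nhds.sub h) (by simp : (1 : ℂ) - 0 ≠ 0)
    rwa [neg_zero, zero_div] at this
  have hbound (N : ℕ) : ‖S z c - T z c‖ ≤ ‖∏ j ∈ range N, a j‖ * (M₁ + M₂) := by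
    rw [hiter N, norm_mul]
    gcongr
    exact (norm_sub_le _ _).trans (add_le_add (hSM _ _ (hzN N) (hcN N)) (hTM _ _ (hzN N) (hcN N)))
  have hlim : Tendsto (fun N ↦ ‖∏ j ∈ range N, a j‖ * (M₁ + M₂)) atTop (𝓝 0) := by
    simpa using (tendsto_prod_range_zero ha).norm.mul_const (M₁ + M₂)
  exact sub_eq_zero.1 (norm_le_zero_iff.1 (ge_of_tendsto' hlim hbound))

/-- Theorem 2.2: for |q| < 1, |zq| < 1, |c| ≤ 1,
∑_{n≥1} (−1)^{n−1} z^n q^{n(n+1)/2} / ((1 − c q^n)(zq;q)_n)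
  = ∑_{n≥1} z q^n ∏_{k=1}^{n-1}(c − z q^k) / (zq;q)_n. -/
theorem stmt2 (q z c : ℂ) (hq : ‖q‖ < 1) (hzq : ‖z * q‖ < 1)
    (hc : ‖c‖ ≤ 1) :
    ∑' n : ℕ, (-1) ^ n * z ^ (n + 1) * q ^ ((n + 1) * (n + 2) / 2) /
        ((1 - c * q ^ (n + 1)) * qPoch (z * q) q (n + 1)) =
      ∑' n : ℕ, z * q ^ (n + 1) * (∏ k ∈ Finset.Icc 1 n, (c - z * q ^ k)) /
        qPoch (z * q) q (n + 1) :=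
  eq_of_functional_equation hq hzq (S := fun w d ↦ ∑' n, lhsTerm q w d n)
    (T := fun w d ↦ ∑' n, rhsTerm q w d n) (g := fun w d ↦ w * q / (1 - d * q))
    (fun _ _ hw hd ↦ lhs_functional_equation hq hzq hw hd)
    (fun _ _ hw hd ↦ rhs_functional_equation hq hzq hw hd)
    (fun _ _ hw hd ↦ norm_tsum_lhsTerm_le hq hzq hw hd)
    (fun _ _ hw hd ↦ norm_tsum_rhsTerm_le hq hzq hw hd) le_rfl hc
end

section
/- For every positive integer n, the following identity holds in the polynomial ring ℤ[z]: ∑_{π ∈ D(n)} (−1)^{#(π)−1} ( ∑_{j=0}^{s(π)−1} z^{l(π)+1−s(π)+j} ) = ∑_{d | n} z^d, where the right-hand sum runs over the positive divisors d of n. (Equivalently, for z ∉ {0,1}: ∑_{π ∈ D(n)} (−1)^{#(π)−1} z^{l(π)+1} (1 − z^{−s(π)})/(z − 1) = ∑_{d|n} z^d.) -/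
open Finset Polynomial

/-- The smallest part of a partition. -/
noncomputable def sPart {n : ℕ} (π : n.Partition) : ℕ := sInf {i | i ∈ π.parts}

/-- The largest part of a partition. -/
def lPart {n : ℕ} (π : n.Partition) : ℕ := π.parts.sup

/-!
The coefficient of `z ^ m` on the left is the signed number of distinct partitions of `n` with
`l - s < m ≤ l`. Their sets of parts are exactly the `m`-narrow sets with sum `n` (nonempty sets of
naturals, `0` allowed, whose elements differ by less than `m`) having an element `≥ m`. For `m`-narrow sets with
sum `t` the signed count is `[m ∣ t]`: those inside `{0, …, m - 1}` contribute `[t = 0]`, because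
toggling `0` reverses the sign, and replacing the largest element `M ≥ m` of the others by `M - m`
is a sign-preserving bijection onto the `m`-narrow sets with sum `t - m`.
-/

variable {R : Type*} [Ring R]

theorem sum_neg_one_pow_card_powerset_filter_sum_eq_zero {s : Finset ℕ} (hs : 0 ∈ s) (t : ℕ) :
    ∑ Z ∈ s.powerset with ∑ x ∈ Z, x = t, (-1 : R) ^ #Z = 0 := by
  rw [sum_filter, ← insert_erase hs, sum_powerset_insert (notMem_erase 0 s), ← sum_add_distrib]
  refine sum_eq_zero fun Z hZ => ?_
  have h0 : 0 ∉ Z := fun h => notMem_erase 0 s (mem_powerset.1 hZ h)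
  rw [sum_insert h0, zero_add, card_insert_of_notMem h0, pow_succ]
  split_ifs <;> simp

theorem card_insert_erase_of_mem_of_notMem {α : Type*} [DecidableEq α] {s : Finset α} {a b : α}
    (ha : a ∈ s) (hb : b ∉ s) : #(insert b (s.erase a)) = #s := by
  rw [card_insert_of_notMem fun h => hb (mem_of_mem_erase h), card_erase_add_one ha]

theorem insert_erase_insert_erase_of_notMem {α : Type*} [DecidableEq α] {s : Finset α} {a b : α}
    (ha : a ∈ s) (hb : b ∉ s) : insert a ((insert b (s.erase a)).erase b) = s := by
  rw [erase_insert fun h => hb (mem_of_mem_erase h), insert_erase ha]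

def narrowSets (t m : ℕ) : Finset (Finset ℕ) :=
  (range (t + 1)).powerset.filter fun Z =>
    Z.Nonempty ∧ ∑ x ∈ Z, x = t ∧ ∀ x ∈ Z, ∀ y ∈ Z, x < y + m

theorem le_of_mem_narrowSets {t m x : ℕ} {Z : Finset ℕ} (hZ : Z ∈ narrowSets t m) (hx : x ∈ Z) :
    x ≤ t :=
  mem_range_succ_iff.1 (mem_powerset.1 (mem_filter.1 hZ).1 hx)

theorem mem_narrowSets {t m : ℕ} {Z : Finset ℕ} :
    Z ∈ narrowSets t m ↔ Z.Nonempty ∧ ∑ x ∈ Z, x = t ∧ ∀ x ∈ Z, ∀ y ∈ Z, x < y + m := by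
  refine mem_filter.trans (and_iff_right_of_imp fun ⟨_, hsum, _⟩ => mem_powerset.2 fun x hx => ?_)
  exact mem_range_succ_iff.2 (hsum ▸ single_le_sum (f := fun x => x) (fun _ _ => Nat.zero_le _) hx)

theorem filter_not_subset_range_narrowSets_eq_empty {t m : ℕ} (htm : t < m) :
    (narrowSets t m).filter (¬· ⊆ range m) = ∅ :=
  filter_eq_empty_iff.2 fun _ hZ => not_not.2 fun _ hx =>
    mem_range.2 ((le_of_mem_narrowSets hZ hx).trans_lt htm)

theorem insert_erase_mem_narrowSets {t m a b : ℕ} {Z : Finset ℕ} (hZ : Z ∈ narrowSets t m)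
    (ha : a ∈ Z) (hb : b ∉ Z) (hwidth : ∀ x ∈ Z.erase a, x < b + m ∧ b < x + m) :
    insert b (Z.erase a) ∈ narrowSets (t + b - a) m := by
  obtain ⟨-, hsum, hnarrow⟩ := mem_narrowSets.1 hZ
  have hb' : b ∉ Z.erase a := fun h => hb (mem_of_mem_erase h)
  refine mem_narrowSets.2 ⟨insert_nonempty _ _, ?_, ?_⟩
  · rw [sum_insert hb', ← hsum, ← sum_erase_add _ _ ha]
    omega
  · simp only [mem_insert]
    rintro x (rfl | hx) y (rfl | hy)
    · have := hnarrow a ha a ha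
      omega
    · exact (hwidth y hy).2
    · exact (hwidth x hx).1
    · exact hnarrow x (mem_of_mem_erase hx) y (mem_of_mem_erase hy)

theorem sum_narrowSets_filter_subset_range {m : ℕ} (hm : 0 < m) (t : ℕ) :
    ∑ Z ∈ narrowSets t m with Z ⊆ range m, (-1 : R) ^ (#Z - 1) = if t = 0 then 1 else 0 := by
  set S := (range m).powerset.filter fun Z => ∑ x ∈ Z, x = t
  have hS : (narrowSets t m).filter (· ⊆ range m) = S.erase ∅ := by
    ext Z
    simp only [mem_filter, mem_narrowSets, mem_erase, mem_powerset, S, ← nonempty_iff_ne_empty]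
    constructor
    · rintro ⟨⟨hne, hsum, -⟩, hsub⟩
      exact ⟨hne, hsub, hsum⟩
    · rintro ⟨hne, hsub, hsum⟩
      refine ⟨⟨hne, hsum, fun x hx y _ => ?_⟩, hsub⟩
      have := mem_range.1 (hsub hx)
      omega
  have hsign : ∀ Z ∈ S.erase ∅, (-1 : R) ^ (#Z - 1) = -(-1) ^ #Z := fun Z hZ => by
    obtain ⟨k, hk⟩ := Nat.exists_eq_add_one_of_ne_zero (card_ne_zero.2
      (nonempty_iff_ne_empty.2 (ne_of_mem_erase hZ)))
    simp [hk, pow_succ]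
  have hS0 : ∑ Z ∈ S, (-1 : R) ^ #Z = 0 :=
    sum_neg_one_pow_card_powerset_filter_sum_eq_zero (mem_range.2 hm) t
  rw [hS, sum_congr rfl hsign, sum_neg_distrib]
  by_cases ht : t = 0
  · rw [sum_erase_eq_sub (by simp [S, ht]), hS0]
    simp [ht]
  · rw [erase_eq_of_notMem (by simp [S, Ne.symm ht]), hS0]
    simp [ht]

noncomputable def shiftDown (m : ℕ) (Z : Finset ℕ) : Finset ℕ :=
  insert (sSup (Z : Set ℕ) - m) (Z.erase (sSup Z))

noncomputable def shiftUp (m : ℕ) (W : Finset ℕ) : Finset ℕ :=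
  insert (sInf (W : Set ℕ) + m) (W.erase (sInf W))

theorem shiftDown_spec {t m : ℕ} {Z : Finset ℕ} (hZ : Z ∈ narrowSets t m) (hbig : ¬Z ⊆ range m) :
    shiftDown m Z ∈ narrowSets (t - m) m ∧ #(shiftDown m Z) = #Z ∧
      shiftUp m (shiftDown m Z) = Z := by
  obtain ⟨hne, -, hnarrow⟩ := mem_narrowSets.1 hZ
  obtain ⟨hM, hle⟩ : IsGreatest (Z : Set ℕ) (sSup Z) :=
    ⟨hne.csSup_mem, fun _ hx => le_csSup Z.bddAbove hx⟩
  set M := sSup (Z : Set ℕ)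
  obtain ⟨x, hx, hxm⟩ := not_subset.1 hbig
  have hmM : m ≤ M := (not_lt.1 (mt mem_range.2 hxm)).trans (hle hx)
  have hMt : M ≤ t := le_of_mem_narrowSets hZ hM
  have hwindow : ∀ y ∈ Z.erase M, y < M ∧ M - m < y := fun y hy => by
    have := hnarrow _ hM _ (mem_of_mem_erase hy)
    have := hle (mem_of_mem_erase hy)
    have := ne_of_mem_erase hy
    omega
  have hnotMem : M - m ∉ Z := fun h => by
    have := hnarrow _ hM _ h
    omega
  have hleast : sInf (shiftDown m Z : Set ℕ) = M - m := by
    refine IsLeast.csInf_eq ⟨mem_insert_self _ _, fun y hy => ?_⟩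
    rcases mem_insert.1 hy with rfl | hy
    exacts [le_rfl, (hwindow y hy).2.le]
  refine ⟨?_, card_insert_erase_of_mem_of_notMem hM hnotMem, ?_⟩
  · have h := insert_erase_mem_narrowSets hZ hM hnotMem fun y hy => by
      have := hwindow y hy
      omega
    rwa [show t + (M - m) - M = t - m by omega] at h
  · rw [shiftUp, hleast, Nat.sub_add_cancel hmM]
    exact insert_erase_insert_erase_of_notMem hM hnotMem

theorem shiftUp_spec {s m : ℕ} {W : Finset ℕ} (hW : W ∈ narrowSets s m) :
    shiftUp m W ∈ narrowSets (s + m) m ∧ ¬shiftUp m W ⊆ range m ∧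
      shiftDown m (shiftUp m W) = W := by
  obtain ⟨hne, -, hnarrow⟩ := mem_narrowSets.1 hW
  obtain ⟨hb, hle⟩ := isLeast_csInf (coe_nonempty.2 hne)
  set b := sInf (W : Set ℕ)
  have hwindow : ∀ y ∈ W.erase b, b < y ∧ y < b + m := fun y hy => by
    have := hnarrow _ (mem_of_mem_erase hy) _ hb
    have := hle (mem_of_mem_erase hy)
    have := ne_of_mem_erase hy
    omega
  have hnotMem : b + m ∉ W := fun h => by
    have := hnarrow _ h _ hb
    omega
  have hgreatest : sSup (shiftUp m W : Set ℕ) = b + m := by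
    refine IsGreatest.csSup_eq ⟨mem_insert_self _ _, fun y hy => ?_⟩
    rcases mem_insert.1 hy with rfl | hy
    exacts [le_rfl, (hwindow y hy).2.le]
  refine ⟨?_, fun h => ?_, ?_⟩
  · have h := insert_erase_mem_narrowSets hW hb hnotMem fun y hy => by
      have := hwindow y hy
      omega
    rwa [show s + (b + m) - b = s + m by omega] at h
  · have := mem_range.1 (h (mem_insert_self _ _))
    omega
  · rw [shiftDown, hgreatest, Nat.add_sub_cancel]
    exact insert_erase_insert_erase_of_notMem hb hnotMem

theorem sum_narrowSets_filter_not_subset_range {t m : ℕ} (hmt : m ≤ t) :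
    ∑ Z ∈ narrowSets t m with ¬Z ⊆ range m, (-1 : R) ^ (#Z - 1) =
      ∑ Z ∈ narrowSets (t - m) m, (-1 : R) ^ (#Z - 1) := by
  have hdown {Z : Finset ℕ} (hZ : Z ∈ (narrowSets t m).filter (¬· ⊆ range m)) :=
    shiftDown_spec (mem_filter.1 hZ).1 (mem_filter.1 hZ).2
  refine sum_nbij' (shiftDown m) (shiftUp m) (fun Z hZ => (hdown hZ).1) (fun W hW => ?_)
    (fun Z hZ => (hdown hZ).2.2) (fun W hW => (shiftUp_spec hW).2.2)
    (fun Z hZ => by rw [(hdown hZ).2.1])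
  obtain ⟨hmem, hbig, -⟩ := shiftUp_spec hW
  exact mem_filter.2 ⟨Nat.sub_add_cancel hmt ▸ hmem, hbig⟩

theorem sum_narrowSets {m : ℕ} (hm : 0 < m) (t : ℕ) :
    ∑ Z ∈ narrowSets t m, (-1 : R) ^ (#Z - 1) = if m ∣ t then 1 else 0 := by
  induction t using Nat.strong_induction_on with
  | _ t ih =>
    rw [← sum_filter_add_sum_filter_not _ (· ⊆ range m), sum_narrowSets_filter_subset_range hm]
    rcases lt_or_ge t m with htm | hmt
    · have hdvd : m ∣ t ↔ t = 0 := ⟨fun h => Nat.eq_zero_of_dvd_of_lt h htm, (· ▸ dvd_zero m)⟩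
      rw [filter_not_subset_range_narrowSets_eq_empty htm, sum_empty, add_zero]
      simp only [hdvd]
    · rw [sum_narrowSets_filter_not_subset_range hmt, ih (t - m) (by omega), if_neg (by omega),
        zero_add]
      simp only [Nat.dvd_sub_iff_left hmt (dvd_refl m)]

theorem sPart_mem {n : ℕ} {π : n.Partition} (h : π.parts ≠ 0) : sPart π ∈ π.parts :=
  Nat.sInf_mem (Multiset.exists_mem_of_ne_zero h)

theorem sPart_le {n x : ℕ} {π : n.Partition} (hx : x ∈ π.parts) : sPart π ≤ x :=
  Nat.sInf_le hx

theorem le_lPart {n x : ℕ} {π : n.Partition} (hx : x ∈ π.parts) : x ≤ lPart π :=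
  Multiset.le_sup hx

theorem sPart_le_lPart {n : ℕ} (π : n.Partition) : sPart π ≤ lPart π := by
  rcases eq_or_ne π.parts 0 with h | h
  · simp [sPart, h]
  · exact le_lPart (sPart_mem h)

theorem lPart_sub_sPart_lt_and_le_lPart_iff {n m : ℕ} {π : n.Partition} (h : π.parts ≠ 0) :
    lPart π - sPart π < m ∧ m ≤ lPart π ↔
      (∀ x ∈ π.parts, ∀ y ∈ π.parts, x < y + m) ∧ ∃ x ∈ π.parts, m ≤ x := by
  constructor
  · rintro ⟨hlt, hle⟩
    refine ⟨fun x hx y hy => ?_, ?_⟩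
    · have := le_lPart hx
      have := sPart_le hy
      have := sPart_le_lPart π
      omega
    · by_contra! hsmall
      have : lPart π ≤ m - 1 := Multiset.sup_le.2 fun x hx => by
        have := hsmall x hx
        omega
      omega
  · rintro ⟨hnarrow, x, hx, hmx⟩
    have : lPart π ≤ sPart π + m - 1 := Multiset.sup_le.2 fun y hy => by
      have := hnarrow y hy _ (sPart_mem h)
      omega
    have := le_lPart hx
    have := hnarrow x hx x hx
    omega

theorem sum_distincts_window_eq_sum_narrowSets (n m : ℕ) :
    ∑ π ∈ Nat.Partition.distincts n with lPart π - sPart π < m ∧ m ≤ lPart π,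
        (-1 : R) ^ (Multiset.card π.parts - 1) =
      ∑ Z ∈ narrowSets n m with ¬Z ⊆ range m, (-1 : R) ^ (#Z - 1) := by
  refine sum_bij' (fun π hπ => ⟨π.parts, (mem_filter.1 (mem_filter.1 hπ).1).2⟩)
    (fun Z hZ => ⟨Z.val, fun {i} hi => ?_, ?_⟩) (fun π hπ => ?_) (fun Z hZ => ?_)
    (fun _ _ => rfl) (fun _ _ => rfl) (fun _ _ => rfl)
  · obtain ⟨hZ, hbig⟩ := mem_filter.1 hZ
    obtain ⟨x, hx, hxm⟩ := not_subset.1 hbig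
    have := (mem_narrowSets.1 hZ).2.2 x hx i hi
    have := mem_range.not.1 hxm
    omega
  · rw [sum_val]
    exact (mem_narrowSets.1 (mem_filter.1 hZ).1).2.1
  · obtain ⟨-, hwindow⟩ := mem_filter.1 hπ
    have hne : π.parts ≠ 0 := fun h => by
      simp [lPart, h] at hwindow
      omega
    obtain ⟨hnarrow, x, hx, hmx⟩ := (lPart_sub_sPart_lt_and_le_lPart_iff hne).1 hwindow
    refine mem_filter.2 ⟨mem_narrowSets.2 ⟨Multiset.exists_mem_of_ne_zero hne,
      (sum_val _).symm.trans π.parts_sum, hnarrow⟩, fun h => ?_⟩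
    have := mem_range.1 (h hx)
    omega
  · obtain ⟨hZ, hbig⟩ := mem_filter.1 hZ
    obtain ⟨hne, -, hnarrow⟩ := mem_narrowSets.1 hZ
    obtain ⟨x, hx, hxm⟩ := not_subset.1 hbig
    refine mem_filter.2 ⟨mem_filter.2 ⟨mem_univ _, Z.nodup⟩, ?_⟩
    exact (lPart_sub_sPart_lt_and_le_lPart_iff (val_eq_zero.not.2 hne.ne_empty)).2
      ⟨hnarrow, x, hx, not_lt.1 (mt mem_range.2 hxm)⟩

theorem sum_distincts_window (n m : ℕ) :
    ∑ π ∈ Nat.Partition.distincts n with lPart π - sPart π < m ∧ m ≤ lPart π,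
        (-1 : R) ^ (Multiset.card π.parts - 1) = if m ∈ n.divisors then 1 else 0 := by
  rcases m.eq_zero_or_pos with rfl | hm
  · simp
  rw [sum_distincts_window_eq_sum_narrowSets, eq_sub_of_add_eq' (sum_filter_add_sum_filter_not
      (narrowSets n m) (· ⊆ range m) fun Z => (-1 : R) ^ (#Z - 1)),
    sum_narrowSets hm, sum_narrowSets_filter_subset_range hm]
  by_cases hn : n = 0 <;> simp [hn, Nat.mem_divisors]

theorem coeff_sum_range_X_pow_add {S : Type*} [Semiring S] (a k i : ℕ) :
    (∑ j ∈ range k, (X : S[X]) ^ (a + j)).coeff i = if a ≤ i ∧ i < a + k then 1 else 0 := by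
  rw [← Nat.add_sub_cancel_left (n := a) (m := k), ← sum_Ico_eq_sum_range, finsetSum_coeff]
  simp [coeff_X_pow]

theorem stmt7_general (n : ℕ) :
    ∑ π ∈ Nat.Partition.distincts n,
        (-1 : Polynomial ℤ) ^ (Multiset.card π.parts - 1) *
          ∑ j ∈ Finset.range (sPart π), X ^ (lPart π + 1 - sPart π + j) =
      ∑ d ∈ n.divisors, X ^ d := by
  ext i
  have hcoeff (π : n.Partition) :
      ((-1 : ℤ[X]) ^ (Multiset.card π.parts - 1) *
          ∑ j ∈ range (sPart π), X ^ (lPart π + 1 - sPart π + j)).coeff i =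
        if lPart π - sPart π < i ∧ i ≤ lPart π then (-1) ^ (Multiset.card π.parts - 1) else 0 := by
    have := sPart_le_lPart π
    rw [← C_1, ← C_neg, ← C_pow, coeff_C_mul, coeff_sum_range_X_pow_add, mul_ite, mul_one,
      mul_zero]
    exact if_congr (by omega) rfl rfl
  simp only [finsetSum_coeff, hcoeff, coeff_X_pow, sum_ite_eq]
  rw [← sum_filter, sum_distincts_window]

/-- Corollary 2.6 (partition version) as an identity in ℤ[z]:
∑_{π ∈ D(n)} (−1)^{#(π)−1} ∑_{j=0}^{s(π)−1} z^{l(π)+1−s(π)+j} = ∑_{d ∣ n} z^d. -/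
theorem stmt7 (n : ℕ) (hn : 0 < n) :
    ∑ π ∈ Nat.Partition.distincts n,
        (-1 : Polynomial ℤ) ^ (Multiset.card π.parts - 1) *
          ∑ j ∈ Finset.range (sPart π), X ^ (lPart π + 1 - sPart π + j) =
      ∑ d ∈ n.divisors, X ^ d :=
  stmt7_general n
end
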